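/- Let n, N ≥ 1, let 0 < ε < 1, and let K_1, …, K_N ∈ M_n(ℂ) satisfy ∑_{j=1}^N K_j^* K_j = I_n and ∑_{j=1}^N K_j K_j^* = I_n. Suppose the map Φ(X) = ∑_{j=1}^N K_j X K_j^* has an ε-spectral gap. If P ∈ M_n(ℂ) is a projection such that P K_j^* K_i (I_n − P) = 0 for all 1 ≤ i, j ≤ N, then P = 0 or P = I_n. (In other words, the quantum graph S = span{K_j^* K_i} admits no nontrivial disconnecting projection; by the characterization of connectivity of quantum graphs, the quantum graph associated to Φ is connected.) -/

import Mathlib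

open Matrix Finset

/-- The Hilbert–Schmidt norm `‖A‖_HS = (tr(AᴴA))^{1/2}` of a complex matrix. -/
noncomputable def hsNorm {n : ℕ} (A : Matrix (Fin n) (Fin n) ℂ) : ℝ :=
  Real.sqrt (Aᴴ * A).trace.re

/-- `Φ` has an `ε`-spectral gap:
`‖Φ(X) − (tr X / n)·I‖_HS ≤ (1−ε)‖X − (tr X / n)·I‖_HS` for all `X`. -/
def HasSpectralGap {n : ℕ} (Φ : Matrix (Fin n) (Fin n) ℂ → Matrix (Fin n) (Fin n) ℂ)
    (ε : ℝ) : Prop :=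
  ∀ X : Matrix (Fin n) (Fin n) ℂ,
    hsNorm (Φ X - (X.trace / (n : ℂ)) • 1) ≤ (1 - ε) * hsNorm (X - (X.trace / (n : ℂ)) • 1)

/-!
Put `Q = 1 - P`. Since `Φ` is unital, `Φ(P) + Φ(Q) = 1`, and the hypothesis gives
`Φ(P) Φ(Q) = ∑ Kⱼ (P Kⱼᴴ Kᵢ Q) Kᵢᴴ = 0`; hence `Φ(P)` is again a projection, and it has the same
trace as `P` because `Φ` is trace preserving. The Hilbert–Schmidt distance from a projection to a
scalar matrix `c • 1` depends only on the trace of the projection, so the spectral gap applied to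
`P` reads `‖P - c • 1‖_HS ≤ (1 - ε) ‖P - c • 1‖_HS`. Thus `P = c • 1`, and an idempotent scalar
matrix is `0` or `1`.
-/

open scoped ComplexOrder in
theorem hsNorm_eq_zero {n : ℕ} {A : Matrix (Fin n) (Fin n) ℂ} : hsNorm A = 0 ↔ A = 0 := by
  obtain ⟨hre, him⟩ := Complex.nonneg_iff.mp (posSemidef_conjTranspose_mul_self A).trace_nonneg
  rw [hsNorm, Real.sqrt_eq_zero hre, ← trace_conjTranspose_mul_self_eq_zero_iff]
  exact ⟨fun h => Complex.ext h him.symm, fun h => by rw [h, Complex.zero_re]⟩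

theorem hsNorm_nonneg {n : ℕ} (A : Matrix (Fin n) (Fin n) ℂ) : 0 ≤ hsNorm A :=
  Real.sqrt_nonneg _

section StarProjection

variable {m α : Type*} [Fintype m] [DecidableEq m]

theorem IsStarProjection.trace_conjTranspose_sub_smul_one_mul_self [CommRing α] [StarRing α]
    {R : Matrix m m α} (hR : IsStarProjection R) (c : α) :
    ((R - c • 1)ᴴ * (R - c • 1)).trace =
      (1 - star c - c) * R.trace + star c * c * Fintype.card m := by
  have hRR : R * R = R := hR.isIdempotentElem
  have hRh : Rᴴ = R := hR.isSelfAdjoint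
  have hsq : (R - c • 1)ᴴ * (R - c • 1) = (1 - star c - c) • R + (star c * c) • 1 := by
    rw [conjTranspose_sub, conjTranspose_smul, conjTranspose_one, hRh]
    simp only [sub_mul, mul_sub, hRR, smul_mul_assoc, mul_smul_comm, one_mul, mul_one]
    module
  rw [hsq, trace_add, trace_smul, trace_smul, trace_one, smul_eq_mul, smul_eq_mul]

theorem hsNorm_sub_smul_one_eq_of_trace_eq {n : ℕ} {R S : Matrix (Fin n) (Fin n) ℂ}
    (hR : IsStarProjection R) (hS : IsStarProjection S) (htr : R.trace = S.trace) (c : ℂ) :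
    hsNorm (R - c • 1) = hsNorm (S - c • 1) := by
  rw [hsNorm, hsNorm, hR.trace_conjTranspose_sub_smul_one_mul_self,
    hS.trace_conjTranspose_sub_smul_one_mul_self, htr]

theorem eq_zero_or_eq_one_of_eq_smul_one [Field α] {P : Matrix m m α} (hP : IsIdempotentElem P)
    {c : α} (hc : P = c • 1) : P = 0 ∨ P = 1 := by
  rcases subsingleton_or_nontrivial (Matrix m m α) with _ | _
  · exact Or.inl (Subsingleton.elim _ _)
  have hcc : (c * c) • (1 : Matrix m m α) = c • 1 := by
    simpa only [hc, smul_mul_smul_comm, one_mul] using hP.eq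
  rcases IsIdempotentElem.iff_eq_zero_or_one.mp (smul_left_injective α one_ne_zero hcc) with h | h
  · exact Or.inl (by rw [hc, h, zero_smul])
  · exact Or.inr (by rw [hc, h, one_smul])

end StarProjection

section KrausMap

variable {ι m α : Type*} [Fintype ι] [Fintype m]

def krausMap [Semiring α] [StarRing α] (K : ι → Matrix m m α) (X : Matrix m m α) :
    Matrix m m α :=
  ∑ j, K j * X * (K j)ᴴ

theorem trace_krausMap [DecidableEq m] [CommSemiring α] [StarRing α] {K : ι → Matrix m m α}
    (hK : ∑ j, (K j)ᴴ * K j = 1) (X : Matrix m m α) : (krausMap K X).trace = X.trace := by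
  simp only [krausMap, trace_sum, trace_mul_cycle (K _) X]
  rw [← trace_sum, ← Finset.sum_mul, hK, one_mul]

variable [Ring α] [StarRing α] {K : ι → Matrix m m α}

theorem krausMap_add_krausMap_one_sub [DecidableEq m] (hK : ∑ j, K j * (K j)ᴴ = 1)
    (X : Matrix m m α) : krausMap K X + krausMap K (1 - X) = 1 := by
  simp only [krausMap, ← Finset.sum_add_distrib, ← add_mul, ← mul_add, add_sub_cancel, mul_one, hK]

theorem krausMap_mul_krausMap_eq_zero {X Y : Matrix m m α}
    (h : ∀ i j, X * (K j)ᴴ * K i * Y = 0) : krausMap K X * krausMap K Y = 0 := by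
  rw [krausMap, krausMap, Finset.sum_mul_sum]
  refine Finset.sum_eq_zero fun j _ => Finset.sum_eq_zero fun i _ => ?_
  calc K j * X * (K j)ᴴ * (K i * Y * (K i)ᴴ) = K j * (X * (K j)ᴴ * K i * Y) * (K i)ᴴ := by
        simp only [Matrix.mul_assoc]
    _ = 0 := by rw [h, Matrix.mul_zero, Matrix.zero_mul]

theorem IsSelfAdjoint.krausMap {X : Matrix m m α} (hX : IsSelfAdjoint X) :
    IsSelfAdjoint (krausMap K X) := by
  refine isSelfAdjoint_sum _ fun j _ => ?_
  rw [IsSelfAdjoint, star_eq_conjTranspose, conjTranspose_mul, conjTranspose_mul,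
    conjTranspose_conjTranspose, ← star_eq_conjTranspose X, hX.star_eq, Matrix.mul_assoc]

theorem IsStarProjection.krausMap [DecidableEq m] {P : Matrix m m α} (hP : IsStarProjection P)
    (hK : ∑ j, K j * (K j)ᴴ = 1) (h : ∀ i j, P * (K j)ᴴ * K i * (1 - P) = 0) :
    IsStarProjection (krausMap K P) where
  isIdempotentElem := by
    have hsum := krausMap_add_krausMap_one_sub hK P
    have hmul := krausMap_mul_krausMap_eq_zero h
    rw [eq_sub_of_add_eq' hsum, mul_sub, mul_one, sub_eq_zero] at hmul
    exact hmul.symm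
  isSelfAdjoint := hP.isSelfAdjoint.krausMap

end KrausMap

theorem quantum_expander_connected_general {n N : ℕ}
    (ε : ℝ) (hε0 : 0 < ε)
    (K : Fin N → Matrix (Fin n) (Fin n) ℂ)
    (hKtp : ∑ j, (K j)ᴴ * K j = 1) (hKunital : ∑ j, K j * (K j)ᴴ = 1)
    (hgap : HasSpectralGap (fun X => ∑ j, K j * X * (K j)ᴴ) ε)
    (P : Matrix (Fin n) (Fin n) ℂ) (hP : Pᴴ = P) (hP2 : P * P = P)
    (h : ∀ i j, P * (K j)ᴴ * K i * (1 - P) = 0) :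
    P = 0 ∨ P = 1 := by
  have hPproj : IsStarProjection P := ⟨hP2, hP⟩
  set c : ℂ := P.trace / n
  have hgapP : hsNorm (krausMap K P - c • 1) ≤ (1 - ε) * hsNorm (P - c • 1) := hgap P
  rw [hsNorm_sub_smul_one_eq_of_trace_eq (hPproj.krausMap hKunital h) hPproj
    (trace_krausMap hKtp P)] at hgapP
  have hzero : hsNorm (P - c • 1) = 0 :=
    le_antisymm (by nlinarith [hsNorm_nonneg (P - c • 1)]) (hsNorm_nonneg _)
  exact eq_zero_or_eq_one_of_eq_smul_one hP2 (sub_eq_zero.mp (hsNorm_eq_zero.mp hzero))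

/-- A CPTP unital map with an `ε`-spectral gap has a connected quantum graph: there is no
nontrivial projection `P` with `P Kⱼᴴ Kᵢ (I − P) = 0` for all `i, j`. -/
theorem quantum_expander_connected {n N : ℕ} (hn : 1 ≤ n) (hN : 1 ≤ N)
    (ε : ℝ) (hε0 : 0 < ε) (hε1 : ε < 1)
    (K : Fin N → Matrix (Fin n) (Fin n) ℂ)
    (hKtp : ∑ j, (K j)ᴴ * K j = 1) (hKunital : ∑ j, K j * (K j)ᴴ = 1)
    (hgap : HasSpectralGap (fun X => ∑ j, K j * X * (K j)ᴴ) ε)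
    (P : Matrix (Fin n) (Fin n) ℂ) (hP : Pᴴ = P) (hP2 : P * P = P)
    (h : ∀ i j, P * (K j)ᴴ * K i * (1 - P) = 0) :
    P = 0 ∨ P = 1 :=
  quantum_expander_connected_general ε hε0 K hKtp hKunital hgap P hP hP2 h
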